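/- arXiv:1104.0726 — 5 statements merged into one kernel-verified Lean document; each statement's English description precedes it below -/
import Mathlib

section
/- Let n ≥ 1, k ≥ 1 and let a1 ≥ a2 ≥ 1 be integers. Then there exists a constant C > 0 (depending on n, k, a1, a2) such that for all sufficiently large positive integers m, the cokernel of the linear map D^k : V_{m·a1−k, m·a2+k−(n+1)} → V_{m·a1, m·a2−(n+1)} has ℂ-dimension at most C·m^{2n−2}. -/
open MvPolynomial

/-- The space of bihomogeneous polynomials of bidegree `(a, b)` in the two groups of
variables `x_0, …, x_n` (indexed by `Sum.inl`) and `y_0, …, y_n` (indexed by `Sum.inr`). -/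
noncomputable def Vab (n a b : ℕ) :
    Submodule ℂ (MvPolynomial (Fin (n + 1) ⊕ Fin (n + 1)) ℂ) :=
  weightedHomogeneousSubmodule ℂ
    (Sum.elim (fun _ => ((1 : ℕ), (0 : ℕ))) (fun _ => ((0 : ℕ), (1 : ℕ)))) (a, b)

/-- The operator `D = ∑ i, x_i · ∂/∂y_i`. -/
noncomputable def Dop (n : ℕ) :
    Module.End ℂ (MvPolynomial (Fin (n + 1) ⊕ Fin (n + 1)) ℂ) :=
  ∑ i : Fin (n + 1),
    (LinearMap.mulLeft ℂ (X (Sum.inl i))).comp (pderiv (Sum.inr i)).toLinearMap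

/-!
`D` is the raising operator `e` of the `sl₂`-triple of derivations `e = ∑ xᵢ ∂/∂yᵢ`,
`f = ∑ yᵢ ∂/∂xᵢ`, `h = [e, f]`, and `h` acts on `V_{a,b}` by `a - b`. From
`e f^{j+1} = f^{j+1} e + (j + 1) f^j (h - j)` and induction on the `y`-degree, `f^j` is injective
on `V_{a,b}` when `b + j ≤ a`. The Fischer inner product `⟪p, q⟫ = ∑ₛ s! conj(pₛ) qₛ` makes `e`
and `f` adjoint, so `⟪f^{j-k} p, e^k f^j p⟫ = ‖f^j p‖²` and `e^k f^j` is injective on `V_{a,b}`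
too. With `A = m a₁`, `B = m a₂ - (n + 1)` and `δ = max(0, B + k - A)`, the map `D^k f^{k+δ}`
embeds `V_{A+δ,B-δ}` into the image of `D^k`, so the cokernel has dimension at most
`dim V_{A,B} - dim V_{A+δ,B-δ}`. Here `dim V_{a,b} = binom(a + n, n) binom(b + n, n)` is a
product of two polynomials of degree `n`, and `(A, B)`, `(A + δ, B - δ)` have the same sum with
`δ ≤ k`, so the leading terms cancel and the difference is `O(m^{2n-2})`.
-/

section Estimates

open Nat Finset

theorem prod_sub_prod_le {α R : Type*} [CommRing R] [LinearOrder R] [IsStrictOrderedRing R]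
    (s : Finset α) {f g : α → R} {e U : R} (hg : ∀ i ∈ s, 0 ≤ g i) (hgf : ∀ i ∈ s, g i ≤ f i)
    (hfU : ∀ i ∈ s, f i ≤ U) (hfg : ∀ i ∈ s, f i - g i ≤ e) :
    ∏ i ∈ s, f i - ∏ i ∈ s, g i ≤ #s * e * U ^ (#s - 1) := by
  classical
  induction s using Finset.induction_on with
  | empty => simp
  | insert a s ha ih =>
    simp only [forall_mem_insert] at hg hgf hfU hfg
    have hD : 0 ≤ ∏ i ∈ s, f i - ∏ i ∈ s, g i := sub_nonneg.mpr (prod_le_prod hg.2 hgf.2)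
    have hG : 0 ≤ ∏ i ∈ s, g i := prod_nonneg hg.2
    have hGU : ∏ i ∈ s, g i ≤ U ^ #s :=
      (prod_le_prod hg.2 fun i hi => (hgf.2 i hi).trans (hfU.2 i hi)).trans_eq (prod_const U)
    have hU : 0 ≤ U := hg.1.trans (hgf.1.trans hfU.1)
    have he : 0 ≤ e := (sub_nonneg.mpr hgf.1).trans hfg.1
    rw [prod_insert ha, prod_insert ha, card_insert_of_notMem ha, add_tsub_cancel_right]
    calc f a * ∏ i ∈ s, f i - g a * ∏ i ∈ s, g i
        = f a * (∏ i ∈ s, f i - ∏ i ∈ s, g i) + (f a - g a) * ∏ i ∈ s, g i := by ring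
      _ ≤ U * (#s * e * U ^ (#s - 1)) + e * U ^ #s :=
          add_le_add (mul_le_mul hfU.1 (ih hg.2 hgf.2 hfU.2 hfg.2) hD hU)
            (mul_le_mul hfg.1 hGU hG he)
      _ = (#s + 1 : ℕ) * e * U ^ #s := by
          rcases #s with _ | t
          · simp
          · push_cast; ring

theorem factorial_mul_choose_eq_prod (n c : ℕ) :
    (n ! : ℝ) * (c + n).choose n = ∏ i ∈ range n, ((c : ℝ) + 1 + i) := by
  have h := (ascFactorial_eq_factorial_mul_choose c n).symm
  rw [ascFactorial_eq_prod_range] at h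
  exact_mod_cast h

theorem choose_mul_choose_sub_choose_mul_choose_le {n A B δ : ℕ} (hδB : δ ≤ B) (hBA : B ≤ A) :
    ((A + n).choose n * (B + n).choose n : ℝ) - (A + δ + n).choose n * (B - δ + n).choose n ≤
      (n * (δ * (A - B + δ)) * (A + n) ^ (2 * (n - 1)) : ℕ) := by
  set f : ℕ → ℝ := fun i => ((A : ℝ) + 1 + i) * ((B : ℝ) + 1 + i)
  set g : ℕ → ℝ := fun i => ((A + δ : ℕ) + 1 + i : ℝ) * ((B - δ : ℕ) + 1 + i : ℝ)
  set e : ℝ := ((δ * (A - B + δ) : ℕ) : ℝ)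
  -- the factors of `f` and `g` have the same sum, so their difference does not depend on `i`
  have hfg : ∀ i, f i - g i = e := by
    intro i
    simp only [f, g, e]
    push_cast [Nat.cast_sub hδB, Nat.cast_sub hBA]
    ring
  have hgf : ∀ i, g i ≤ f i := fun i => by linarith [hfg i, (by positivity : 0 ≤ e)]
  have hfU : ∀ i ∈ range n, f i ≤ (A + n : ℝ) ^ 2 := by
    intro i hi
    have hi : (i : ℝ) + 1 ≤ n := by exact_mod_cast mem_range.mp hi
    have hB : (B : ℝ) ≤ A := by exact_mod_cast hBA
    rw [sq]
    exact mul_le_mul (by linarith) (by linarith) (by positivity) (by positivity)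
  have hprod : ((n ! : ℝ) * n !) * (((A + n).choose n * (B + n).choose n : ℝ) -
      (A + δ + n).choose n * (B - δ + n).choose n) = ∏ i ∈ range n, f i - ∏ i ∈ range n, g i := by
    simp only [f, g, prod_mul_distrib, ← factorial_mul_choose_eq_prod]
    ring
  have hbound := prod_sub_prod_le (range n) (fun i _ => by positivity) (fun i _ => hgf i) hfU
    (fun i _ => (hfg i).le)
  rw [card_range, ← pow_mul] at hbound
  have hfac : (1 : ℝ) ≤ n ! * n ! := by
    have : (1 : ℝ) ≤ n ! := by exact_mod_cast Nat.one_le_iff_ne_zero.mpr (factorial_ne_zero n)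
    nlinarith
  have hnonneg : 0 ≤ ∏ i ∈ range n, f i - ∏ i ∈ range n, g i :=
    sub_nonneg.mpr (prod_le_prod (fun i _ => by positivity) fun i _ => hgf i)
  have hcast : ((n * (δ * (A - B + δ)) * (A + n) ^ (2 * (n - 1)) : ℕ) : ℝ) =
      n * e * (A + n : ℝ) ^ (2 * (n - 1)) := by
    simp only [e]
    push_cast
    ring
  rw [hcast]
  nlinarith

end Estimates

theorem mul_pow_succ_eq_of_sl2 {A : Type*} [Ring A] {e f h : A} (hef : e * f - f * e = h)
    (hhf : h * f - f * h = -(2 • f)) (j : ℕ) :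
    e * f ^ (j + 1) = f ^ (j + 1) * e + (j + 1) • (f ^ j * h) - (j * (j + 1)) • f ^ j := by
  have hef' : e * f = f * e + h := by rw [← hef]; abel
  have hhf' : h * f = f * h - 2 • f := by rw [sub_eq_iff_eq_add.mp hhf]; abel
  induction j with
  | zero => simp [hef']
  | succ j ih =>
    rw [pow_succ _ (j + 1), ← mul_assoc, ih]
    simp only [sub_mul, add_mul, smul_mul_assoc, mul_assoc, hef', hhf', mul_add, mul_sub,
      mul_smul_comm]
    simp only [← mul_assoc, ← pow_succ]
    module

theorem Derivation.finsetSum_apply {R A M ι : Type*} [CommSemiring R] [CommSemiring A]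
    [Algebra R A] [AddCommMonoid M] [Module A M] [Module R M] (s : Finset ι)
    (D : ι → Derivation R A M) (a : A) : (∑ i ∈ s, D i) a = ∑ i ∈ s, D i a := by
  rw [← Derivation.coeFnAddMonoidHom_apply, map_sum, Finset.sum_apply]
  rfl

theorem MvPolynomial.IsWeightedHomogeneous.comp_addMonoidHom {σ R M N : Type*} [CommSemiring R]
    [AddCommMonoid M] [AddCommMonoid N] {w : σ → M} {φ : MvPolynomial σ R} {m : M}
    (h : IsWeightedHomogeneous w φ m) (g : M →+ N) :
    IsWeightedHomogeneous (g ∘ w) φ (g m) := by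
  intro d hd
  rw [← h hd, Finsupp.weight_apply, Finsupp.weight_apply, Finsupp.sum, Finsupp.sum, map_sum]
  simp

open Nat in
theorem Finsupp.prod_factorial_add_single {σ : Type*} [Fintype σ] (t : σ →₀ ℕ) (j : σ) :
    ∏ i, ((t + single j 1 : σ →₀ ℕ) i)! = (t j + 1) * ∏ i, (t i)! := by
  classical
  have h : ∀ i, ((t + single j 1 : σ →₀ ℕ) i)! = (t i)! * if j = i then t j + 1 else 1 := by
    intro i
    rcases eq_or_ne j i with rfl | hji
    · simp [Nat.factorial_succ, mul_comm]
    · simp [hji]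
  simp only [h, Finset.prod_mul_distrib, Finset.prod_ite_eq, Finset.mem_univ, if_true, mul_comm]

namespace MvPolynomial

section Fischer

open Nat ComplexConjugate

variable {σ 𝕜 : Type*} [Fintype σ] [RCLike 𝕜]

noncomputable def fischer (p : MvPolynomial σ 𝕜) : MvPolynomial σ 𝕜 →ₗ[𝕜] 𝕜 :=
  ∑ s ∈ p.support, (((∏ i, (s i)! : ℕ) : 𝕜) * conj (coeff s p)) • lcoeff 𝕜 s

lemma fischer_monomial (p : MvPolynomial σ 𝕜) (t : σ →₀ ℕ) (c : 𝕜) :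
    fischer p (monomial t c) = (∏ i, (t i)! : ℕ) * conj (coeff t p) * c := by
  classical
  simp only [fischer, LinearMap.sum_apply, LinearMap.smul_apply, lcoeff_apply,
    coeff_monomial, smul_eq_mul, mul_ite, mul_zero]
  rw [Finset.sum_ite_eq]
  split_ifs with ht
  · rfl
  · rw [notMem_support_iff.mp ht, map_zero, mul_zero, zero_mul]

lemma fischer_add (p q : MvPolynomial σ 𝕜) : fischer (p + q) = fischer p + fischer q := by
  refine linearMap_ext fun t => LinearMap.ext_ring ?_
  simp [fischer_monomial, coeff_add, mul_add]

lemma fischer_sum {α : Type*} (s : Finset α) (p : α → MvPolynomial σ 𝕜) :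
    fischer (∑ i ∈ s, p i) = ∑ i ∈ s, fischer (p i) :=
  map_sum (AddMonoidHom.mk' fischer fischer_add) p s

lemma fischer_X_mul (j : σ) (u : MvPolynomial σ 𝕜) :
    fischer (X j * u) = fischer u ∘ₗ (pderiv j).toLinearMap := by
  classical
  refine linearMap_ext fun t => LinearMap.ext_ring ?_
  rcases eq_or_ne (t j) 0 with htj | htj
  · simp [fischer_monomial, coeff_X_mul', htj]
  obtain ⟨s, rfl⟩ : ∃ s, t = s + Finsupp.single j 1 :=
    ⟨t - Finsupp.single j 1, (tsub_add_cancel_of_le (Finsupp.single_le_iff.mpr (by omega))).symm⟩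
  rw [mul_comm (X j) u]
  simp only [LinearMap.comp_apply, fischer_monomial, coeff_mul_X, Finsupp.prod_factorial_add_single,
    Derivation.coeFn_coe, pderiv_monomial, add_tsub_cancel_right]
  simp only [Finsupp.coe_add, Pi.add_apply, Finsupp.single_eq_same]
  push_cast
  ring

lemma fischer_pderiv (j : σ) (u : MvPolynomial σ 𝕜) :
    fischer (pderiv j u) = fischer u ∘ₗ LinearMap.mulLeft 𝕜 (X j) := by
  classical
  refine linearMap_ext fun t => LinearMap.ext_ring ?_
  simp only [LinearMap.comp_apply, LinearMap.mulLeft_apply, fischer_monomial, coeff_pderiv]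
  rw [X, monomial_mul, one_mul, add_comm (Finsupp.single j 1) t, fischer_monomial,
    Finsupp.prod_factorial_add_single, map_mul, map_add, map_natCast, map_one]
  push_cast
  ring

lemma eq_zero_of_fischer_self_eq_zero {p : MvPolynomial σ 𝕜} (h : fischer p p = 0) : p = 0 := by
  have hsum : ∑ s ∈ p.support, (∏ i, (s i)! : ℕ) * ‖coeff s p‖ ^ 2 = (0 : ℝ) := by
    rw [← RCLike.ofReal_eq_zero (K := 𝕜), ← h]
    simp [fischer, RCLike.conj_mul, mul_assoc]
  rw [Finset.sum_eq_zero_iff_of_nonneg (fun _ _ => by positivity)] at hsum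
  rw [← support_eq_empty, Finset.eq_empty_iff_forall_notMem]
  intro s hs
  simpa [Finset.prod_eq_zero_iff, Nat.factorial_ne_zero, mem_support_iff.mp hs] using hsum s hs

end Fischer

end MvPolynomial

namespace Polarization

section Bigrading

variable (ι R : Type*) [CommSemiring R]

def biweight : ι ⊕ ι → ℕ × ℕ := Sum.elim (fun _ => (1, 0)) (fun _ => (0, 1))

abbrev bihomogeneousSubmodule (a b : ℕ) : Submodule R (MvPolynomial (ι ⊕ ι) R) :=
  weightedHomogeneousSubmodule R (biweight ι) (a, b)

end Bigrading

section Ring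

variable (ι R : Type*) [Fintype ι] [CommRing R]

local notation "𝒫" => MvPolynomial (ι ⊕ ι) R

/-- `(polarE, polarF, polarH)` is an `sl₂`-triple; the variables `xᵢ` are `X (inl i)` and the
`yᵢ` are `X (inr i)`. -/
noncomputable def polarE : Derivation R 𝒫 𝒫 := ∑ i : ι, (X (Sum.inl i) : 𝒫) • pderiv (Sum.inr i)

noncomputable def polarF : Derivation R 𝒫 𝒫 := ∑ i : ι, (X (Sum.inr i) : 𝒫) • pderiv (Sum.inl i)

noncomputable def polarH : Derivation R 𝒫 𝒫 :=
  ∑ i : ι, ((X (Sum.inl i) : 𝒫) • pderiv (Sum.inl i) - (X (Sum.inr i) : 𝒫) • pderiv (Sum.inr i))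

variable {ι R}

local notation "𝔼" => (polarE ι R : Module.End R 𝒫)
local notation "𝔽" => (polarF ι R : Module.End R 𝒫)
local notation "ℍ" => (polarH ι R : Module.End R 𝒫)
local notation "𝒱" => bihomogeneousSubmodule ι R

lemma polarE_apply (p : 𝒫) : polarE ι R p = ∑ i, X (Sum.inl i) * pderiv (Sum.inr i) p := by
  simp [polarE, Derivation.finsetSum_apply]

lemma polarF_apply (p : 𝒫) : polarF ι R p = ∑ i, X (Sum.inr i) * pderiv (Sum.inl i) p := by
  simp [polarF, Derivation.finsetSum_apply]

lemma lie_polarE_polarF : ⁅polarE ι R, polarF ι R⁆ = polarH ι R := by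
  classical
  refine derivation_ext fun j => ?_
  rcases j with l | l <;>
    simp [Derivation.commutator_apply, polarE, polarF, polarH, Derivation.finsetSum_apply,
      pderiv_X, Pi.single_apply]

lemma lie_polarH_polarF : ⁅polarH ι R, polarF ι R⁆ = -(2 • polarF ι R) := by
  classical
  refine derivation_ext fun j => ?_
  rcases j with l | l <;>
    simp [Derivation.commutator_apply, polarF, polarH, Derivation.finsetSum_apply, pderiv_X,
      Pi.single_apply]
  ring

lemma polarE_mul_polarF_pow_succ (j : ℕ) :
    𝔼 * 𝔽 ^ (j + 1) = 𝔽 ^ (j + 1) * 𝔼 + (j + 1) • (𝔽 ^ j * ℍ) - (j * (j + 1)) • 𝔽 ^ j := by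
  refine mul_pow_succ_eq_of_sl2 ?_ ?_ j <;>
    rw [← Ring.lie_def, ← Derivation.commutator_coe_linear_map]
  · rw [lie_polarE_polarF]
  · rw [lie_polarH_polarF]; rfl

lemma polarE_mem {a b : ℕ} {p : 𝒫} (hp : p ∈ 𝒱 a (b + 1)) : polarE ι R p ∈ 𝒱 (a + 1) b := by
  rw [polarE_apply]
  refine Submodule.sum_mem _ fun i _ => ?_
  have h := (isWeightedHomogeneous_X R _ (Sum.inl i)).mul
    (hp.pderiv (i := Sum.inr i) (n' := (a, b)) rfl)
  rwa [biweight, Sum.elim_inl, Prod.mk_add_mk, add_comm 1, zero_add] at h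

lemma polarF_mem {a b : ℕ} {p : 𝒫} (hp : p ∈ 𝒱 (a + 1) b) : polarF ι R p ∈ 𝒱 a (b + 1) := by
  rw [polarF_apply]
  refine Submodule.sum_mem _ fun i _ => ?_
  have h := (isWeightedHomogeneous_X R _ (Sum.inr i)).mul
    (hp.pderiv (i := Sum.inl i) (n' := (a, b)) rfl)
  rwa [biweight, Sum.elim_inr, Prod.mk_add_mk, add_comm 1, zero_add] at h

lemma polarF_pow_mem {a b j : ℕ} {p : 𝒫} (hp : p ∈ 𝒱 (a + j) b) : (𝔽 ^ j) p ∈ 𝒱 a (b + j) := by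
  induction j generalizing a with
  | zero => simpa using hp
  | succ j ih =>
    rw [pow_succ', Module.End.mul_apply, ← add_assoc]
    exact polarF_mem (ih (by rwa [add_right_comm, add_assoc]))

lemma polarE_eq_zero_of_mem {a : ℕ} {p : 𝒫} (hp : p ∈ 𝒱 a 0) : polarE ι R p = 0 := by
  refine (polarE_apply p).trans (Finset.sum_eq_zero fun i _ => ?_)
  suffices pderiv (Sum.inr i) p = 0 by rw [this, mul_zero]
  ext m
  rw [coeff_pderiv, coeff_zero, hp.coeff_eq_zero, zero_mul]
  intro h
  have := congrArg Prod.snd h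
  simp [map_add, biweight, Finsupp.weight_single] at this

lemma polarH_apply_of_mem {a b : ℕ} {p : 𝒫} (hp : p ∈ 𝒱 a b) :
    polarH ι R p = ((a : R) - b) • p := by
  have hx := (hp.comp_addMonoidHom (AddMonoidHom.fst ℕ ℕ)).sum_weight_X_mul_pderiv
  have hy := (hp.comp_addMonoidHom (AddMonoidHom.snd ℕ ℕ)).sum_weight_X_mul_pderiv
  simp only [Fintype.sum_sum_type, Function.comp_apply, biweight, Sum.elim_inl, Sum.elim_inr,
    AddMonoidHom.coe_fst, AddMonoidHom.coe_snd, one_smul, zero_smul, Finset.sum_const_zero,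
    add_zero, zero_add] at hx hy
  simp only [polarH, Derivation.finsetSum_apply, Derivation.sub_apply, Derivation.smul_apply,
    smul_eq_mul, Finset.sum_sub_distrib, hx, hy, sub_smul, Nat.cast_smul_eq_nsmul]

lemma polarE_polarF_pow_succ_apply {a b : ℕ} {p : 𝒫} (hp : p ∈ 𝒱 a b) (j : ℕ) :
    polarE ι R ((𝔽 ^ (j + 1)) p) =
      (𝔽 ^ (j + 1)) (polarE ι R p) + (((j : R) + 1) * (a - b - j)) • (𝔽 ^ j) p := by
  have h := LinearMap.congr_fun (polarE_mul_polarF_pow_succ (ι := ι) (R := R) j) p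
  simp only [Module.End.mul_apply, LinearMap.add_apply, LinearMap.sub_apply,
    LinearMap.smul_apply, Derivation.coeFn_coe, polarH_apply_of_mem hp, map_smul] at h
  rw [h, ← Nat.cast_smul_eq_nsmul R, ← Nat.cast_smul_eq_nsmul R]
  push_cast
  module

lemma polarF_pow_polarE_apply_eq_zero {a b k : ℕ} {p : 𝒫} (hp : p ∈ 𝒱 a b)
    (h : (𝔽 ^ (k + 1)) p = 0) : (𝔽 ^ (k + 2)) (polarE ι R p) = 0 := by
  have := polarE_polarF_pow_succ_apply hp k
  rw [h, map_zero, eq_comm, ← eq_neg_iff_add_eq_zero] at this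
  rw [pow_succ', Module.End.mul_apply, this, map_neg, map_smul, ← Module.End.mul_apply,
    ← pow_succ', h, smul_zero, neg_zero]

variable [IsDomain R] [CharZero R]

lemma polarF_pow_apply_eq_zero_of_succ {a b k : ℕ} {p : 𝒫} (hp : p ∈ 𝒱 a b) (hba : b + k < a)
    (hE : polarE ι R p = 0) (h : (𝔽 ^ (k + 1)) p = 0) : (𝔽 ^ k) p = 0 := by
  have := polarE_polarF_pow_succ_apply hp k
  rw [h, hE, map_zero, map_zero, zero_add, eq_comm, smul_eq_zero] at this
  refine this.resolve_left (mul_ne_zero (Nat.cast_add_one_ne_zero k) ?_)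
  rw [sub_sub, sub_ne_zero]
  exact_mod_cast hba.ne'

theorem eq_zero_of_polarF_pow_apply_eq_zero {a b k : ℕ} {p : 𝒫} (hp : p ∈ 𝒱 a b)
    (hba : b + k ≤ a) (h : (𝔽 ^ k) p = 0) : p = 0 := by
  induction b using Nat.strong_induction_on generalizing a k p with
  | _ b ihb =>
  induction k with
  | zero => simpa using h
  | succ k ihk =>
    -- `e p` has smaller `y`-degree and is killed by `f^{k+2}`, so it vanishes
    have hE : polarE ι R p = 0 := by
      rcases b with _ | b
      · exact polarE_eq_zero_of_mem hp
      · exact ihb b (by omega) (polarE_mem hp) (by omega) (polarF_pow_polarE_apply_eq_zero hp h)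
    exact ihk (by omega) (polarF_pow_apply_eq_zero_of_succ hp (by omega) hE h)

end Ring

section Dimension

variable {ι R : Type*} [Fintype ι] [CommRing R]

local notation "𝒱" => bihomogeneousSubmodule ι R

lemma weight_biweight (d : ι ⊕ ι →₀ ℕ) :
    Finsupp.weight (biweight ι) d = (∑ i, d (Sum.inl i), ∑ i, d (Sum.inr i)) := by
  ext <;> simp [Finsupp.weight_eq_sum, Fintype.sum_sum_type, biweight, Prod.fst_sum, Prod.snd_sum]

variable (ι) in
noncomputable def bidegreeFinset [DecidableEq ι] (a b : ℕ) : Finset (ι ⊕ ι →₀ ℕ) :=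
  (Finset.univ.finsuppAntidiag a ×ˢ Finset.univ.finsuppAntidiag b).map
    Finsupp.sumFinsuppEquivProdFinsupp.symm.toEmbedding

lemma bihomogeneousSubmodule_eq_restrictSupport [DecidableEq ι] (a b : ℕ) :
    𝒱 a b = restrictSupport R ↑(bidegreeFinset ι a b) := by
  rw [bihomogeneousSubmodule, weightedHomogeneousSubmodule_eq_finsupp_supported]
  congr 1
  ext d
  simp only [Set.mem_ofPred_eq, weight_biweight, Finset.mem_coe, bidegreeFinset,
    Finset.mem_map_equiv, Equiv.symm_symm, Finset.mem_product, Finset.mem_finsuppAntidiag,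
    Finset.subset_univ, and_true, Prod.mk.injEq]
  exact Iff.rfl

instance (a b : ℕ) : Module.Finite R (𝒱 a b) := by
  classical
  rw [bihomogeneousSubmodule_eq_restrictSupport]
  exact Module.Finite.of_basis (basisRestrictSupport R _)

theorem finrank_bihomogeneousSubmodule [Nontrivial R] (a b : ℕ) :
    Module.finrank R (𝒱 a b) =
      (Fintype.card ι + a - 1).choose a * (Fintype.card ι + b - 1).choose b := by
  classical
  rw [bihomogeneousSubmodule_eq_restrictSupport,
    Module.finrank_eq_card_basis (basisRestrictSupport R _)]
  simp only [Finset.coe_sort_coe, Fintype.card_coe]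
  rw [bidegreeFinset, Finset.card_map, Finset.card_product,
    Finset.card_finsuppAntidiag_nat_eq_choose, Finset.card_finsuppAntidiag_nat_eq_choose,
    Finset.card_univ]

end Dimension

section Fischer

variable {ι 𝕜 : Type*} [Fintype ι] [RCLike 𝕜]

local notation "𝒫" => MvPolynomial (ι ⊕ ι) 𝕜
local notation "𝔼" => (polarE ι 𝕜 : Module.End 𝕜 𝒫)
local notation "𝔽" => (polarF ι 𝕜 : Module.End 𝕜 𝒫)
local notation "𝒱" => bihomogeneousSubmodule ι 𝕜

lemma fischer_polarF_apply (u v : 𝒫) : fischer (polarF ι 𝕜 u) v = fischer u (polarE ι 𝕜 v) := by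
  rw [polarF_apply, fischer_sum, LinearMap.sum_apply, polarE_apply, map_sum]
  refine Finset.sum_congr rfl fun i _ => ?_
  rw [fischer_X_mul, LinearMap.comp_apply, fischer_pderiv, LinearMap.comp_apply]
  rfl

lemma fischer_polarF_pow_apply (k : ℕ) (u v : 𝒫) :
    fischer ((𝔽 ^ k) u) v = fischer u ((𝔼 ^ k) v) := by
  induction k generalizing u with
  | zero => rfl
  | succ k ih =>
    rw [pow_succ, Module.End.mul_apply, ih, Derivation.coeFn_coe, fischer_polarF_apply,
      pow_succ', Module.End.mul_apply, Derivation.coeFn_coe]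

theorem eq_zero_of_polarE_pow_polarF_pow_apply_eq_zero {a b j k : ℕ} {p : 𝒫} (hp : p ∈ 𝒱 a b)
    (hkj : k ≤ j) (hba : b + j ≤ a) (h : (𝔼 ^ k) ((𝔽 ^ j) p) = 0) : p = 0 := by
  obtain ⟨δ, rfl⟩ := Nat.exists_eq_add_of_le hkj
  refine eq_zero_of_polarF_pow_apply_eq_zero hp hba (eq_zero_of_fischer_self_eq_zero ?_)
  calc fischer ((𝔽 ^ (k + δ)) p) ((𝔽 ^ (k + δ)) p)
      = fischer ((𝔽 ^ k) ((𝔽 ^ δ) p)) ((𝔽 ^ (k + δ)) p) := by rw [pow_add, Module.End.mul_apply]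
    _ = 0 := by rw [fischer_polarF_pow_apply, h, map_zero]

theorem finrank_le_finrank_range {a₀ b₀ a b j k : ℕ} {T : Submodule 𝕜 𝒫} [Module.Finite 𝕜 T]
    (g : 𝒱 a₀ b₀ →ₗ[𝕜] T) (hg : ∀ v, (g v : 𝒫) = (𝔼 ^ k) v) (hkj : k ≤ j)
    (ha : a = a₀ + j) (hb : b₀ = b + j) (hba : b + j ≤ a) :
    Module.finrank 𝕜 (𝒱 a b) ≤ Module.finrank 𝕜 (LinearMap.range g) := by
  subst ha hb
  let ψ : 𝒱 (a₀ + j) b →ₗ[𝕜] 𝒱 a₀ (b + j) := (𝔽 ^ j).restrict fun _ hp => polarF_pow_mem hp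
  have hinj : Function.Injective (g ∘ₗ ψ) := by
    refine (injective_iff_map_eq_zero _).mpr fun p hp => Subtype.ext ?_
    have := congrArg Subtype.val hp
    rw [LinearMap.comp_apply, hg] at this
    exact eq_zero_of_polarE_pow_polarF_pow_apply_eq_zero p.2 hkj hba this
  calc Module.finrank 𝕜 (𝒱 (a₀ + j) b) = Module.finrank 𝕜 (LinearMap.range (g ∘ₗ ψ)) :=
        (LinearMap.finrank_range_of_inj hinj).symm
    _ ≤ Module.finrank 𝕜 (LinearMap.range g) :=
        Submodule.finrank_mono (LinearMap.range_comp_le_range ψ g)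

end Fischer

end Polarization

open Polarization

lemma Dop_eq_polarE (n : ℕ) : Dop n = polarE (Fin (n + 1)) ℂ :=
  LinearMap.ext fun p => by simp [Dop, polarE_apply]

instance (n a b : ℕ) : Module.Finite ℂ (Vab n a b) :=
  inferInstanceAs (Module.Finite ℂ (bihomogeneousSubmodule (Fin (n + 1)) ℂ a b))

lemma finrank_Vab (n a b : ℕ) :
    Module.finrank ℂ (Vab n a b) = (a + n).choose n * (b + n).choose n := by
  rw [show Vab n a b = bihomogeneousSubmodule (Fin (n + 1)) ℂ a b from rfl,
    finrank_bihomogeneousSubmodule, Fintype.card_fin,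
    show n + 1 + a - 1 = a + n by omega, show n + 1 + b - 1 = b + n by omega,
    Nat.choose_symm_add, Nat.choose_symm_add]

theorem finrank_quotient_range_Dop_pow_le {n a₀ b₀ A B k : ℕ}
    (g : Vab n a₀ b₀ →ₗ[ℂ] Vab n A B) (hg : ∀ v, (g v : MvPolynomial _ ℂ) = (Dop n ^ k) v)
    (ha₀ : a₀ + k = A) (hb₀ : b₀ = B + k) (hBA : B ≤ A) :
    (Module.finrank ℂ (Vab n A B ⧸ LinearMap.range g) : ℝ) ≤
      (n * k ^ 2 * (A + n) ^ (2 * (n - 1)) : ℕ) := by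
  rw [Dop_eq_polarE] at hg
  -- the least `δ` for which `D^k f^{k+δ}` is injective on `V_{A+δ, B-δ}`
  set δ := B + k - A
  have hW : Module.finrank ℂ (Vab n (A + δ) (B - δ)) ≤ Module.finrank ℂ (LinearMap.range g) :=
    finrank_le_finrank_range g hg (Nat.le_add_right k δ) (by omega) (by omega) (by omega)
  have hsum := Submodule.finrank_quotient_add_finrank (LinearMap.range g)
  rw [finrank_Vab] at hW hsum
  have hδ : δ * (A - B + δ) ≤ k ^ 2 := by
    rcases le_total (B + k) A with h | h
    · simp [δ, Nat.sub_eq_zero_of_le h]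
    · rw [show A - B + δ = k by omega, sq]
      exact Nat.mul_le_mul_right k (by omega)
  calc (Module.finrank ℂ (Vab n A B ⧸ LinearMap.range g) : ℝ)
      ≤ ((A + n).choose n * (B + n).choose n : ℝ) -
          (A + δ + n).choose n * (B - δ + n).choose n := by
        rw [le_sub_iff_add_le]
        exact_mod_cast (by omega : Module.finrank ℂ (Vab n A B ⧸ LinearMap.range g) +
          (A + δ + n).choose n * (B - δ + n).choose n ≤ (A + n).choose n * (B + n).choose n)
    _ ≤ (n * (δ * (A - B + δ)) * (A + n) ^ (2 * (n - 1)) : ℕ) :=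
        choose_mul_choose_sub_choose_mul_choose_le (by omega) hBA
    _ ≤ (n * k ^ 2 * (A + n) ^ (2 * (n - 1)) : ℕ) := by gcongr

/-- For `a1 ≥ a2 ≥ 1`, the cokernel of
`D^k : V_{m·a1−k, m·a2+k−(n+1)} → V_{m·a1, m·a2−(n+1)}` has dimension `O(m^{2n−2})`. -/
theorem cokernel_bound_of_a1_ge_a2 (n k a1 a2 : ℕ)
    (hn : 1 ≤ n) (hk : 1 ≤ k) (ha2 : 1 ≤ a2) (h12 : a2 ≤ a1) :
    ∃ C : ℝ, 0 < C ∧ ∃ M : ℕ, ∀ m : ℕ, M ≤ m → 0 < m →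
      ∀ g : (Vab n (m * a1 - k) (m * a2 + k - (n + 1))) →ₗ[ℂ]
            (Vab n (m * a1) (m * a2 - (n + 1))),
        (∀ v, (g v : MvPolynomial (Fin (n + 1) ⊕ Fin (n + 1)) ℂ)
            = ((Dop n) ^ k) (v : MvPolynomial (Fin (n + 1) ⊕ Fin (n + 1)) ℂ)) →
        (Module.finrank ℂ
            (↥(Vab n (m * a1) (m * a2 - (n + 1))) ⧸ LinearMap.range g) : ℝ)
          ≤ C * (m : ℝ) ^ (2 * n - 2) := by
  refine ⟨(n * k ^ 2 * (a1 + n) ^ (2 * n - 2) : ℕ),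
    Nat.cast_pos.mpr (Nat.mul_pos (Nat.mul_pos hn (pow_pos hk 2)) (pow_pos (by omega) _)),
    n + k + 1, fun m hm _ g hg => ?_⟩
  have hm2 : m ≤ m * a2 := Nat.le_mul_of_pos_right m ha2
  have h21 : m * a2 ≤ m * a1 := Nat.mul_le_mul_left m h12
  calc _ ≤ ((n * k ^ 2 * (m * a1 + n) ^ (2 * (n - 1)) : ℕ) : ℝ) :=
        finrank_quotient_range_Dop_pow_le g hg (by omega) (by omega) (by omega)
    _ ≤ _ := by
        rw [← Nat.cast_pow, ← Nat.cast_mul, Nat.cast_le, show 2 * (n - 1) = 2 * n - 2 by omega,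
          mul_assoc (n * k ^ 2), ← mul_pow]
        gcongr
        nlinarith
end

section
/- Let n ≥ 1, k ≥ 1 and let a1 > a2 ≥ 1 be integers. Then for all sufficiently large positive integers m, the linear map D^k : V_{m·a1−k, m·a2+k−(n+1)} → V_{m·a1, m·a2−(n+1)} is surjective. -/
/-!
`D` raises the `x`-degree and `E = ∑ y_i ∂/∂x_i` lowers it; by Euler's identity their commutator
`[D, E] = ∑ x_i ∂/∂x_i - ∑ y_i ∂/∂y_i` acts on `V_{a,b}` as the scalar `a - b`, so `D` and `E`
generate an `sl₂`-action. Pushing an eigenvector of `E ∘ D` along the `D`-string from `V_{b+c,b}`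
down to `V_{·,0}`, where `D` vanishes, shows that `E ∘ D` has no eigenvalue `-t` with `t > 0` on
`V_{b+c,b}`. Hence for `b ≤ a` the operator `D ∘ E = E ∘ D + (a + 1 - b)` is injective, so
bijective, on the finite-dimensional space `V_{a+1,b}`, and `D : V_{a,b+1} → V_{a+1,b}` is onto.
Composing `k` such steps makes `D^k : V_{a-k,b+k} → V_{a,b}` onto whenever `b + 2k ≤ a + 1`, which
holds for `a = m·a1`, `b = m·a2 - (n+1)` as soon as `m ≥ 2k + n + 1`, because `a1 > a2`.
-/
open MvPolynomial

namespace MvPolynomial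

variable {σ R M : Type*}

section CommSemiring

variable [CommSemiring R] {φ : MvPolynomial σ R}

theorem IsWeightedHomogeneous.addMonoidHom_comp {N : Type*} [AddCommMonoid M] [AddCommMonoid N]
    {w : σ → M} {m : M} (h : φ.IsWeightedHomogeneous w m) (f : M →+ N) :
    φ.IsWeightedHomogeneous (f ∘ w) (f m) := fun d hd => by
  rw [← h hd]
  simp [Finsupp.weight_apply, map_finsuppSum]

theorem IsWeightedHomogeneous.pderiv_eq_zero [AddCommMonoid M] [PartialOrder M]
    [CanonicallyOrderedAdd M] {w : σ → M} {m : M} {i : σ}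
    (h : φ.IsWeightedHomogeneous w m) (hi : ¬ w i ≤ m) : pderiv i φ = 0 := by
  ext d
  have hd : Finsupp.weight w (d + Finsupp.single i 1) ≠ m := by
    rw [map_add, Finsupp.weight_single, one_smul]
    exact fun hm => hi (hm ▸ le_add_self)
  rw [coeff_pderiv, h.coeff_eq_zero _ hd, zero_mul, coeff_zero]

end CommSemiring

section CommRing

variable [CommRing R]

theorem pderiv_pderiv_comm (i j : σ) (p : MvPolynomial σ R) :
    pderiv i (pderiv j p) = pderiv j (pderiv i p) := by
  have : ⁅pderiv (R := R) (σ := σ) i, pderiv (R := R) j⁆ = 0 := by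
    refine derivation_ext fun k => ?_
    classical
    simp only [Derivation.commutator_apply, pderiv_X, Pi.single_apply, apply_ite, pderiv_one,
      map_zero, ite_self, sub_self, Derivation.zero_apply]
  rw [← sub_eq_zero, ← Derivation.commutator_apply, this, Derivation.zero_apply]

theorem X_mul_pderiv_commutator [DecidableEq σ] (i j k l : σ) (p : MvPolynomial σ R) :
    X i * pderiv j (X k * pderiv l p) - X k * pderiv l (X i * pderiv j p) =
      (if k = j then X i * pderiv l p else 0) - (if i = l then X k * pderiv j p else 0) := by
  simp only [pderiv_mul, pderiv_X, Pi.single_apply, pderiv_pderiv_comm j l]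
  split_ifs <;> ring

end CommRing

end MvPolynomial

noncomputable def Eop (n : ℕ) :
    Module.End ℂ (MvPolynomial (Fin (n + 1) ⊕ Fin (n + 1)) ℂ) :=
  ∑ i : Fin (n + 1),
    (LinearMap.mulLeft ℂ (X (Sum.inr i))).comp (pderiv (Sum.inl i)).toLinearMap

section

variable {n a b : ℕ} {p : MvPolynomial (Fin (n + 1) ⊕ Fin (n + 1)) ℂ}

theorem Dop_apply (p : MvPolynomial (Fin (n + 1) ⊕ Fin (n + 1)) ℂ) :
    Dop n p = ∑ i, X (Sum.inl i) * pderiv (Sum.inr i) p := by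
  simp [Dop, LinearMap.sum_apply]

theorem Eop_apply (p : MvPolynomial (Fin (n + 1) ⊕ Fin (n + 1)) ℂ) :
    Eop n p = ∑ i, X (Sum.inr i) * pderiv (Sum.inl i) p := by
  simp [Eop, LinearMap.sum_apply]

theorem mem_Vab_iff : p ∈ Vab n a b ↔
    p.IsWeightedHomogeneous (Sum.elim (fun _ => (1, 0)) (fun _ => (0, 1))) (a, b) :=
  Iff.rfl

theorem sum_X_inl_mul_pderiv_inl (hp : p ∈ Vab n a b) :
    ∑ i, X (Sum.inl i) * pderiv (Sum.inl i) p = (a : ℂ) • p := by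
  simpa [Fintype.sum_sum_type, Function.comp_def, smul_eq_C_mul] using
    ((mem_Vab_iff.mp hp).addMonoidHom_comp (AddMonoidHom.fst ℕ ℕ)).sum_weight_X_mul_pderiv

theorem sum_X_inr_mul_pderiv_inr (hp : p ∈ Vab n a b) :
    ∑ i, X (Sum.inr i) * pderiv (Sum.inr i) p = (b : ℂ) • p := by
  simpa [Fintype.sum_sum_type, Function.comp_def, smul_eq_C_mul] using
    ((mem_Vab_iff.mp hp).addMonoidHom_comp (AddMonoidHom.snd ℕ ℕ)).sum_weight_X_mul_pderiv

theorem Dop_Eop_sub_Eop_Dop (p : MvPolynomial (Fin (n + 1) ⊕ Fin (n + 1)) ℂ) :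
    Dop n (Eop n p) - Eop n (Dop n p) =
      ∑ i, X (Sum.inl i) * pderiv (Sum.inl i) p - ∑ i, X (Sum.inr i) * pderiv (Sum.inr i) p := by
  simp only [Dop_apply, Eop_apply, map_sum]
  nth_rewrite 1 [Finset.sum_comm]
  simp_rw [← Finset.sum_sub_distrib, X_mul_pderiv_commutator]
  simp only [Sum.inr.injEq, Sum.inl.injEq, Finset.sum_sub_distrib, Finset.sum_ite_eq,
    Finset.sum_ite_eq', Finset.mem_univ, if_true]

theorem Dop_Eop_of_mem_Vab (hp : p ∈ Vab n a b) :
    Dop n (Eop n p) = Eop n (Dop n p) + ((a : ℂ) - b) • p := by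
  rw [← sub_eq_iff_eq_add', Dop_Eop_sub_Eop_Dop, sum_X_inl_mul_pderiv_inl hp,
    sum_X_inr_mul_pderiv_inr hp, sub_smul]

theorem Dop_mem_Vab (hp : p ∈ Vab n a (b + 1)) : Dop n p ∈ Vab n (a + 1) b := by
  rw [Dop_apply]
  refine Submodule.sum_mem _ fun i _ => ?_
  rw [mul_comm]
  exact ((mem_Vab_iff.mp hp).pderiv (i := Sum.inr i) (n' := (a, b)) rfl).mul
    (isWeightedHomogeneous_X ℂ _ (Sum.inl i))

theorem Eop_mem_Vab (hp : p ∈ Vab n (a + 1) b) : Eop n p ∈ Vab n a (b + 1) := by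
  rw [Eop_apply]
  refine Submodule.sum_mem _ fun i _ => ?_
  rw [mul_comm]
  exact ((mem_Vab_iff.mp hp).pderiv (i := Sum.inl i) (n' := (a, b)) rfl).mul
    (isWeightedHomogeneous_X ℂ _ (Sum.inr i))

theorem Dop_eq_zero_of_mem_Vab_zero (hp : p ∈ Vab n a 0) : Dop n p = 0 := by
  rw [Dop_apply]
  refine Finset.sum_eq_zero fun i _ => ?_
  rw [(mem_Vab_iff.mp hp).pderiv_eq_zero (by simp), mul_zero]

end

instance (n a b : ℕ) : FiniteDimensional ℂ (Vab n a b) := by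
  have hle : Vab n a b ≤ weightedHomogeneousSubmodule ℂ (fun _ => 1) (a + b) := fun p hp => by
    rw [mem_weightedHomogeneousSubmodule]
    convert (mem_Vab_iff.mp hp).addMonoidHom_comp (AddMonoidHom.fst ℕ ℕ + AddMonoidHom.snd ℕ ℕ)
    · next i => cases i <;> rfl
    · rfl
  have : FiniteDimensional ℂ (weightedHomogeneousSubmodule ℂ
      (fun _ : Fin (n + 1) ⊕ Fin (n + 1) => 1) (a + b)) :=
    Module.Finite.iff_fg.mpr (weightedHomogeneousSubmodule_fg ℂ _ (fun _ => one_ne_zero) _)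
  exact Submodule.finiteDimensional_of_le hle

section

variable {n : ℕ}

theorem eq_zero_of_Eop_Dop_eq_neg_smul {b c t : ℕ} (ht : 0 < t)
    {v : MvPolynomial (Fin (n + 1) ⊕ Fin (n + 1)) ℂ} (hv : v ∈ Vab n (b + c) b)
    (hED : Eop n (Dop n v) = -(t : ℂ) • v) : v = 0 := by
  induction b generalizing c t v with
  | zero =>
    rw [Dop_eq_zero_of_mem_Vab_zero hv, map_zero, eq_comm, smul_eq_zero] at hED
    exact hED.resolve_left (by simp [ht.ne'])
  | succ b ih =>
    have hDv : Dop n v ∈ Vab n (b + (c + 2)) b := by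
      convert Dop_mem_Vab hv using 2; omega
    -- `D v` is again an eigenvector of `E ∘ D`, with the more negative eigenvalue `-(t + c + 2)`.
    have hEDD : Eop n (Dop n (Dop n v)) = -((t + (c + 2) : ℕ) : ℂ) • Dop n v := by
      have := Dop_Eop_of_mem_Vab hDv
      rw [hED, map_smul] at this
      rw [eq_sub_of_add_eq this.symm]
      push_cast
      module
    rw [ih (by omega) hDv hEDD, map_zero, eq_comm, smul_eq_zero] at hED
    exact hED.resolve_left (by simp [ht.ne'])

theorem exists_Dop_eq_of_mem_Vab {a b : ℕ} (hba : b ≤ a)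
    {p : MvPolynomial (Fin (n + 1) ⊕ Fin (n + 1)) ℂ} (hp : p ∈ Vab n (a + 1) b) :
    ∃ q ∈ Vab n a (b + 1), Dop n q = p := by
  set DE := (Dop n ∘ₗ Eop n).restrict
    fun q (hq : q ∈ Vab n (a + 1) b) => Dop_mem_Vab (Eop_mem_Vab hq)
  have hinj : Function.Injective DE := by
    refine (injective_iff_map_eq_zero DE).mpr fun v hv => Subtype.ext ?_
    have hED : Eop n (Dop n v) = -((a + 1 - b : ℕ) : ℂ) • v := by
      have := Dop_Eop_of_mem_Vab v.2
      rw [show Dop n (Eop n v) = 0 from congr($hv.1)] at this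
      rw [Nat.cast_sub (by omega), eq_neg_of_add_eq_zero_left this.symm]
      push_cast
      module
    exact eq_zero_of_Eop_Dop_eq_neg_smul (b := b) (c := a + 1 - b) (by omega)
      (by convert v.2 using 2; omega) hED
  obtain ⟨v, hv⟩ := LinearMap.surjective_of_injective hinj ⟨p, hp⟩
  exact ⟨Eop n v, Eop_mem_Vab v.2, congr($hv.1)⟩

theorem exists_Dop_pow_eq_of_mem_Vab {a b k : ℕ} (hk : b + 2 * k ≤ a + 1)
    {p : MvPolynomial (Fin (n + 1) ⊕ Fin (n + 1)) ℂ} (hp : p ∈ Vab n a b) :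
    ∃ q ∈ Vab n (a - k) (b + k), (Dop n ^ k) q = p := by
  induction k with
  | zero => exact ⟨p, hp, rfl⟩
  | succ k ih =>
    obtain ⟨q, hq, rfl⟩ := ih (by omega)
    obtain ⟨r, hr, rfl⟩ := exists_Dop_eq_of_mem_Vab (a := a - k - 1) (b := b + k) (by omega)
      (by convert hq using 2; omega)
    exact ⟨r, by convert hr using 2 <;> omega, by rw [pow_succ, Module.End.mul_apply]⟩

end

theorem surjective_of_a1_gt_a2_general (n k a1 a2 : ℕ)
    (ha2 : 1 ≤ a2) (h12 : a2 < a1) :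
    ∃ M : ℕ, ∀ m : ℕ, M ≤ m → 0 < m →
      ∀ g : (Vab n (m * a1 - k) (m * a2 + k - (n + 1))) →ₗ[ℂ]
            (Vab n (m * a1) (m * a2 - (n + 1))),
        (∀ v, (g v : MvPolynomial (Fin (n + 1) ⊕ Fin (n + 1)) ℂ)
            = ((Dop n) ^ k) (v : MvPolynomial (Fin (n + 1) ⊕ Fin (n + 1)) ℂ)) →
        Function.Surjective g := by
  refine ⟨2 * k + n + 1, fun m hm _ g hg w => ?_⟩
  have hgap : m * a2 + m ≤ m * a1 := by nlinarith
  have hm2 : m ≤ m * a2 := Nat.le_mul_of_pos_right m ha2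
  obtain ⟨q, hq, hDq⟩ := exists_Dop_pow_eq_of_mem_Vab (k := k) (by omega) w.2
  refine ⟨⟨q, by convert hq using 2; omega⟩, Subtype.ext ?_⟩
  rw [hg, ← hDq]

/-- For `a1 > a2 ≥ 1`, the map
`D^k : V_{m·a1−k, m·a2+k−(n+1)} → V_{m·a1, m·a2−(n+1)}` is eventually surjective. -/
theorem surjective_of_a1_gt_a2 (n k a1 a2 : ℕ)
    (hn : 1 ≤ n) (hk : 1 ≤ k) (ha2 : 1 ≤ a2) (h12 : a2 < a1) :
    ∃ M : ℕ, ∀ m : ℕ, M ≤ m → 0 < m →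
      ∀ g : (Vab n (m * a1 - k) (m * a2 + k - (n + 1))) →ₗ[ℂ]
            (Vab n (m * a1) (m * a2 - (n + 1))),
        (∀ v, (g v : MvPolynomial (Fin (n + 1) ⊕ Fin (n + 1)) ℂ)
            = ((Dop n) ^ k) (v : MvPolynomial (Fin (n + 1) ⊕ Fin (n + 1)) ℂ)) →
        Function.Surjective g :=
  surjective_of_a1_gt_a2_general n k a1 a2 ha2 h12
end

section
/- Let n ≥ 1, k ≥ 1 and let a1 > a2 ≥ 1 be integers. Then there exists a constant c > 0 such that for all sufficiently large positive integers m, the kernel of the linear map D^k : V_{m·a1−k, m·a2+k−(n+1)} → V_{m·a1, m·a2−(n+1)} has ℂ-dimension at least c·m^{2n−1}. -/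
open MvPolynomial

/-!
`Dop n` is the derivation `∑ xᵢ ∂/∂yᵢ`, so its kernel is a subalgebra. It contains every `xᵢ` and
the quadrics `qⱼ = x₀ y_{j+1} - x_{j+1} y₀`, hence every product `x^α q^c`, which is bihomogeneous
of bidegree `(|α| + |c|, |c|)` and killed by `D^k`. Setting `y₀ = 0` sends these products to
pairwise distinct monomials, so they are linearly independent, and the kernel of `D^k` on
`V_{a,b}` has dimension at least the number of pairs `(α, c)` with `|α| = a - b`, `|c| = b`.
In the bidegree of the theorem both `a - b ≥ m - 2k` and `b ≥ m - n - 1` grow linearly in `m`,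
and boxes of side `⌊m / 2n⌋` inside the two simplices give `(m / 2n)^(2n-1)` such pairs.
-/

open Finset Module

namespace Derivation

variable {R A : Type*} [CommSemiring R] [CommSemiring A] [Algebra R A]

def constants (D : Derivation R A A) : Subalgebra R A where
  carrier := {a | D a = 0}
  mul_mem' {a b} ha hb := by simp_all [D.leibniz]
  add_mem' {a b} ha hb := by simp_all
  algebraMap_mem' := D.map_algebraMap

theorem mem_constants {D : Derivation R A A} {a : A} : a ∈ D.constants ↔ D a = 0 := Iff.rfl

end Derivation

namespace MvPolynomial

variable {σ R : Type*} [CommSemiring R]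

theorem monomial_equivFunOnFinite_symm_one [Fintype σ] (e : σ → ℕ) :
    monomial (Finsupp.equivFunOnFinite.symm e) (1 : R) = ∏ s, X s ^ e s := by
  rw [monomial_eq, C_1, one_mul, Finsupp.prod_fintype] <;> simp

theorem IsWeightedHomogeneous.comp_addMonoidHom_s7 {M N : Type*} [AddCommMonoid M]
    [AddCommMonoid N] {w : σ → M} {p : MvPolynomial σ R} {m : M}
    (hp : IsWeightedHomogeneous w p m) (f : M →+ N) :
    IsWeightedHomogeneous (f ∘ w) p (f m) := by
  intro d hd
  rw [← hp hd, Finsupp.weight_apply, Finsupp.weight_apply, map_finsuppSum]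
  simp

end MvPolynomial

theorem card_le_finrank_ker_of_linearIndependent {K V W ι : Type*} [DivisionRing K]
    [AddCommGroup V] [Module K V] [FiniteDimensional K V] [AddCommGroup W] [Module K W]
    [Fintype ι] (g : V →ₗ[K] W) {f : ι → V} (hf : LinearIndependent K f)
    (hg : ∀ i, g (f i) = 0) : Fintype.card ι ≤ finrank K (LinearMap.ker g) :=
  (LinearIndependent.of_comp (LinearMap.ker g).subtype
    (v := fun i => (⟨f i, hg i⟩ : LinearMap.ker g)) hf).fintype_card_le_finrank

theorem Finset.Nat.pow_le_card_antidiagonalTuple {N t A : ℕ} (h : N * t ≤ A) :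
    (t + 1) ^ N ≤ #(antidiagonalTuple (N + 1) A) := by
  have hsum (u : Fin N → Fin (t + 1)) : ∑ i, (u i : ℕ) ≤ A :=
    calc ∑ i, (u i : ℕ) ≤ ∑ _i : Fin N, t := sum_le_sum fun i _ => Fin.is_le (u i)
      _ ≤ A := by simpa using h
  calc (t + 1) ^ N = #(univ : Finset (Fin N → Fin (t + 1))) := by simp
    _ ≤ _ := card_le_card_of_injOn (fun u => Fin.cons (A - ∑ i, (u i : ℕ)) fun i => u i)
        (fun u _ => by simp [mem_antidiagonalTuple, Fin.sum_univ_succ, hsum u])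
        (fun u _ v _ huv => funext fun i => Fin.ext (congrFun (Fin.cons_inj.mp huv).2 i))

abbrev Pol (n : ℕ) := MvPolynomial (Fin (n + 1) ⊕ Fin (n + 1)) ℂ

abbrev bidegree (n : ℕ) : Fin (n + 1) ⊕ Fin (n + 1) → ℕ × ℕ :=
  Sum.elim (fun _ => (1, 0)) (fun _ => (0, 1))

instance inst_s7 (n a b : ℕ) : FiniteDimensional ℂ (Vab n a b) := by
  have hle : Vab n a b ≤ weightedHomogeneousSubmodule ℂ (fun _ => 1) (a + b) := fun p hp => by
    have h := (show IsWeightedHomogeneous (bidegree n) p (a, b) from hp).comp_addMonoidHom_s7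
      ((AddMonoidHom.id ℕ).coprod (AddMonoidHom.id ℕ))
    rw [mem_weightedHomogeneousSubmodule]
    convert h using 1
    · exact funext fun s => by cases s <;> rfl
    · rfl
  have : FiniteDimensional ℂ (weightedHomogeneousSubmodule ℂ
      (fun _ : Fin (n + 1) ⊕ Fin (n + 1) => 1) (a + b)) :=
    Module.Finite.iff_fg.mpr (weightedHomogeneousSubmodule_fg ℂ _ (fun _ => one_ne_zero) _)
  exact Submodule.finiteDimensional_of_le hle

noncomputable def dopDerivation (n : ℕ) : Derivation ℂ (Pol n) (Pol n) :=
  ∑ i : Fin (n + 1), (X (Sum.inl i) : Pol n) • pderiv (Sum.inr i)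

theorem dopDerivation_apply (n : ℕ) (p : Pol n) :
    dopDerivation n p = ∑ i, X (Sum.inl i) * pderiv (Sum.inr i) p := by
  rw [dopDerivation, ← Derivation.coeFnAddMonoidHom_apply, map_sum, Finset.sum_apply]
  rfl

theorem Dop_apply_s7 (n : ℕ) (p : Pol n) : Dop n p = dopDerivation n p := by
  simp [Dop, dopDerivation_apply]

variable {n : ℕ}

theorem dopDerivation_X_inl (i : Fin (n + 1)) : dopDerivation n (X (Sum.inl i)) = 0 := by
  simp [dopDerivation_apply]

theorem dopDerivation_X_inr (i : Fin (n + 1)) :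
    dopDerivation n (X (Sum.inr i)) = X (Sum.inl i) := by
  simp [dopDerivation_apply, Pi.single_apply]

noncomputable def quadric (j : Fin n) : Pol n :=
  X (Sum.inl 0) * X (Sum.inr j.succ) - X (Sum.inl j.succ) * X (Sum.inr 0)

noncomputable def xqMonomial (α : Fin (n + 1) → ℕ) (c : Fin n → ℕ) : Pol n :=
  (∏ i, X (Sum.inl i) ^ α i) * ∏ j, quadric j ^ c j

theorem quadric_mem_constants (j : Fin n) : quadric j ∈ (dopDerivation n).constants := by
  simp only [Derivation.mem_constants, quadric, map_sub, Derivation.leibniz, smul_eq_mul,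
    dopDerivation_X_inl, dopDerivation_X_inr]
  ring

theorem xqMonomial_mem_constants (α : Fin (n + 1) → ℕ) (c : Fin n → ℕ) :
    xqMonomial α c ∈ (dopDerivation n).constants :=
  mul_mem (prod_mem fun i _ => pow_mem (dopDerivation_X_inl i) _)
    (prod_mem fun j _ => pow_mem (quadric_mem_constants j) _)

theorem Dop_pow_xqMonomial {k : ℕ} (hk : k ≠ 0) (α : Fin (n + 1) → ℕ) (c : Fin n → ℕ) :
    (Dop n ^ k) (xqMonomial α c) = 0 := by
  obtain ⟨k, rfl⟩ := Nat.exists_eq_succ_of_ne_zero hk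
  rw [pow_succ, Module.End.mul_apply, Dop_apply_s7, xqMonomial_mem_constants, map_zero]

theorem xqMonomial_mem_Vab (α : Fin (n + 1) → ℕ) (c : Fin n → ℕ) :
    xqMonomial α c ∈ Vab n (∑ i, α i + ∑ j, c j) (∑ j, c j) := by
  have hX (i : Fin (n + 1)) :
      IsWeightedHomogeneous (bidegree n) (X (Sum.inl i) : Pol n) (1, 0) :=
    isWeightedHomogeneous_X ℂ _ _
  have hq (j : Fin n) : IsWeightedHomogeneous (bidegree n) (quadric j) (1, 1) :=
    ((isWeightedHomogeneous_X ℂ (bidegree n) _).mul (isWeightedHomogeneous_X ℂ _ _)).sub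
      ((isWeightedHomogeneous_X ℂ (bidegree n) _).mul (isWeightedHomogeneous_X ℂ _ _))
  rw [Vab, mem_weightedHomogeneousSubmodule, xqMonomial]
  convert ((IsWeightedHomogeneous.prod _ _ _ fun i _ => (hX i).pow (α i)).mul
    (IsWeightedHomogeneous.prod _ _ _ fun j _ => (hq j).pow (c j))) using 1
  ext <;> simp [Prod.fst_sum, Prod.snd_sum]

noncomputable def killY0 (n : ℕ) : Pol n →ₐ[ℂ] MvPolynomial (Fin (n + 1) ⊕ Fin n) ℂ :=
  aeval (Sum.elim (fun i => X (Sum.inl i)) (Fin.cases 0 fun j => X (Sum.inr j)))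

def xqExponent (α : Fin (n + 1) → ℕ) (c : Fin n → ℕ) : Fin (n + 1) ⊕ Fin n → ℕ :=
  Sum.elim (α + Pi.single 0 (∑ j, c j)) c

theorem xqExponent_injective :
    Function.Injective fun p : (Fin (n + 1) → ℕ) × (Fin n → ℕ) => xqExponent p.1 p.2 := by
  rintro ⟨α, c⟩ ⟨α', c'⟩ h
  obtain rfl : c = c' := funext fun j => congrFun h (Sum.inr j)
  have hα : α + Pi.single 0 (∑ j, c j) = α' + Pi.single 0 (∑ j, c j) :=
    funext fun i => congrFun h (Sum.inl i)
  rw [(add_left_inj _).mp hα]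

theorem killY0_xqMonomial (α : Fin (n + 1) → ℕ) (c : Fin n → ℕ) :
    killY0 n (xqMonomial α c) =
      monomial (Finsupp.equivFunOnFinite.symm (xqExponent α c)) 1 := by
  rw [monomial_equivFunOnFinite_symm_one, Fintype.prod_sum_type]
  simp only [xqExponent, Sum.elim_inl, Sum.elim_inr, Pi.add_apply, pow_add, prod_mul_distrib]
  have hx0 : ∏ i, (X (Sum.inl i) : MvPolynomial (Fin (n + 1) ⊕ Fin n) ℂ) ^
      Pi.single (0 : Fin (n + 1)) (∑ j, c j) i = X (Sum.inl 0) ^ ∑ j, c j :=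
    (Fintype.prod_eq_single 0 fun i hi => by simp [hi]).trans (by simp)
  rw [hx0]
  simp only [killY0, xqMonomial, quadric, map_mul, map_prod, map_pow, map_sub, aeval_X,
    Sum.elim_inl, Sum.elim_inr, Fin.cases_succ, Fin.cases_zero, mul_zero, sub_zero, mul_pow,
    prod_mul_distrib, prod_pow_eq_pow_sum]
  ring

theorem linearIndependent_xqMonomial :
    LinearIndependent ℂ fun p : (Fin (n + 1) → ℕ) × (Fin n → ℕ) => xqMonomial p.1 p.2 := by
  refine LinearIndependent.of_comp (killY0 n).toLinearMap ?_
  have := (basisMonomials (Fin (n + 1) ⊕ Fin n) ℂ).linearIndependent.comp _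
    (Finsupp.equivFunOnFinite.symm.injective.comp xqExponent_injective)
  simpa [Function.comp_def, killY0_xqMonomial] using this

theorem card_mul_card_le_finrank_ker_Dop_pow {k a b a' b' : ℕ} (hk : k ≠ 0) (hba : b ≤ a)
    (g : Vab n a b →ₗ[ℂ] Vab n a' b') (hg : ∀ v, (g v : Pol n) = (Dop n ^ k) v) :
    #(Nat.antidiagonalTuple (n + 1) (a - b)) * #(Nat.antidiagonalTuple n b) ≤
      finrank ℂ (LinearMap.ker g) := by
  set S := Nat.antidiagonalTuple (n + 1) (a - b) ×ˢ Nat.antidiagonalTuple n b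
  have hmem (p : S) : xqMonomial p.1.1 p.1.2 ∈ Vab n a b := by
    obtain ⟨hα, hc⟩ := mem_product.mp p.2
    rw [Nat.mem_antidiagonalTuple] at hα hc
    simpa [hα, hc, Nat.sub_add_cancel hba] using xqMonomial_mem_Vab p.1.1 p.1.2
  rw [← card_product, ← Fintype.card_coe]
  refine card_le_finrank_ker_of_linearIndependent g (f := fun p : S => ⟨_, hmem p⟩) ?_
    fun p => Subtype.ext ((hg _).trans (Dop_pow_xqMonomial hk _ _))
  exact LinearIndependent.of_comp (Vab n a b).subtype
    (linearIndependent_xqMonomial.comp _ Subtype.val_injective)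

/-- For `a1 > a2 ≥ 1`, the kernel of
`D^k : V_{m·a1−k, m·a2+k−(n+1)} → V_{m·a1, m·a2−(n+1)}` has dimension at least
`c·m^{2n−1}` for some `c > 0` and all sufficiently large `m`. -/
theorem kernel_lower_bound_of_a1_gt_a2 (n k a1 a2 : ℕ)
    (hn : 1 ≤ n) (hk : 1 ≤ k) (ha2 : 1 ≤ a2) (h12 : a2 < a1) :
    ∃ c : ℝ, 0 < c ∧ ∃ M : ℕ, ∀ m : ℕ, M ≤ m → 0 < m →
      ∀ g : (Vab n (m * a1 - k) (m * a2 + k - (n + 1))) →ₗ[ℂ]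
            (Vab n (m * a1) (m * a2 - (n + 1))),
        (∀ v, (g v : MvPolynomial (Fin (n + 1) ⊕ Fin (n + 1)) ℂ)
            = ((Dop n) ^ k) (v : MvPolynomial (Fin (n + 1) ⊕ Fin (n + 1)) ℂ)) →
        c * (m : ℝ) ^ (2 * n - 1) ≤ (Module.finrank ℂ (LinearMap.ker g) : ℝ) := by
  obtain ⟨n, rfl⟩ := Nat.exists_eq_add_of_le' hn
  refine ⟨(1 / (2 * (n + 1) : ℝ)) ^ (2 * n + 1), by positivity, 4 * k + 2 * n + 4,
    fun m hm _ g hg => ?_⟩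
  obtain ⟨t, htm, hmt⟩ : ∃ t : ℕ, 2 * (n * t + t) ≤ m ∧ (m : ℝ) / (2 * (n + 1)) ≤ t + 1 := by
    refine ⟨m / (2 * (n + 1)), by linarith [Nat.mul_div_le m (2 * (n + 1))], ?_⟩
    have := Nat.lt_floor_add_one ((m : ℝ) / (2 * (n + 1) : ℕ))
    rw [Nat.floor_div_eq_div] at this
    exact_mod_cast this.le
  have hma : m * a2 + m ≤ m * a1 := by nlinarith
  have hmb : m ≤ m * a2 := Nat.le_mul_of_pos_right m ha2
  have hA := Nat.pow_le_card_antidiagonalTuple (N := n + 1) (t := t)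
    (A := m * a1 - k - (m * a2 + k - (n + 1 + 1))) (by rw [add_mul, one_mul]; omega)
  have hB := Nat.pow_le_card_antidiagonalTuple (N := n) (t := t)
    (A := m * a2 + k - (n + 1 + 1)) (by omega)
  have hker := card_mul_card_le_finrank_ker_Dop_pow (by omega) (by omega) g hg
  calc (1 / (2 * (n + 1) : ℝ)) ^ (2 * n + 1) * (m : ℝ) ^ (2 * (n + 1) - 1)
      = ((m : ℝ) / (2 * (n + 1))) ^ (2 * n + 1) := by
        rw [show 2 * (n + 1) - 1 = 2 * n + 1 by omega, ← mul_pow, one_div_mul_eq_div]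
    _ ≤ (t + 1) ^ (2 * n + 1) := pow_le_pow_left₀ (by positivity) hmt _
    _ = ((t + 1) ^ (n + 1) * (t + 1) ^ n : ℕ) := by push_cast; ring
    _ ≤ (Module.finrank ℂ (LinearMap.ker g) : ℝ) := by
        exact_mod_cast (Nat.mul_le_mul hA hB).trans hker
end

section
/- Let n ≥ 1, k ≥ 1, and let A, B, i be nonnegative integers with i ≤ A and i + k ≤ B. In ℂ[x_0,…,x_n,y_0,…,y_n], define v_i = Σ_{j=0}^{i} (−1)^j·C(i,j)·x_0^{A−j}·x_1^{j}·y_0^{B−i+j}·y_1^{i−j}, where C(i,j) is the binomial coefficient. Then D^k(v_i) ≠ 0. -/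
open MvPolynomial

/-!
`D` is the derivation `∑ xᵢ ∂/∂yᵢ`, so it kills every `xᵢ` and the determinant
`ω = x₀y₁ - x₁y₀`, while `D y₀ = x₀`. By the binomial theorem
`vᵢ = x₀^(A-i) · ωⁱ · y₀^(B-i)`, hence
`Dᵏ vᵢ = (B-i)(B-i-1)⋯(B-i-k+1) · x₀^(A-i) · ωⁱ · x₀ᵏ · y₀^(B-i-k)`,
a product of nonzero factors in an integral domain as long as `k ≤ B - i`.
-/

namespace Derivation

variable {R A : Type*} [CommSemiring R] [CommSemiring A] [Algebra R A]

theorem iterate_mul_of_apply_eq_zero (D : Derivation R A A) {a : A} (ha : D a = 0)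
    (b : A) (k : ℕ) : (⇑D)^[k] (a * b) = a * (⇑D)^[k] b := by
  induction k with
  | zero => rfl
  | succ k ih =>
    rw [Function.iterate_succ_apply', Function.iterate_succ_apply', ih, leibniz, ha,
      smul_zero, add_zero, smul_eq_mul]

theorem iterate_pow_of_apply_eq (D : Derivation R A A) {x y : A} (hy : D y = x)
    (hx : D x = 0) (m k : ℕ) :
    (⇑D)^[k] (y ^ m) = (m.descFactorial k : A) * x ^ k * y ^ (m - k) := by
  induction k with
  | zero => simp
  | succ k ih =>
    have hxk : D ((m.descFactorial k : A) * x ^ k) = 0 := by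
      rw [leibniz, leibniz_pow, hx, map_natCast]
      simp
    rw [Function.iterate_succ_apply', ih, leibniz, hxk, smul_zero, add_zero, leibniz_pow, hy,
      Nat.descFactorial_succ, Nat.sub_sub, nsmul_eq_mul, smul_eq_mul, Nat.cast_mul, pow_succ]
    ring

end Derivation

section Polarization

variable (n : ℕ)

noncomputable def polarization :
    Derivation ℂ (MvPolynomial (Fin (n + 1) ⊕ Fin (n + 1)) ℂ)
      (MvPolynomial (Fin (n + 1) ⊕ Fin (n + 1)) ℂ) :=
  ∑ i : Fin (n + 1),
    (X (Sum.inl i) : MvPolynomial (Fin (n + 1) ⊕ Fin (n + 1)) ℂ) • pderiv (Sum.inr i)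

theorem polarization_apply (p : MvPolynomial (Fin (n + 1) ⊕ Fin (n + 1)) ℂ) :
    polarization n p = ∑ i : Fin (n + 1), X (Sum.inl i) * pderiv (Sum.inr i) p := by
  rw [polarization, ← Derivation.coeFnAddMonoidHom_apply, map_sum, Finset.sum_apply]
  rfl

theorem toLinearMap_polarization : (polarization n).toLinearMap = Dop n := by
  refine LinearMap.ext fun p => ?_
  simp [polarization_apply, Dop]

theorem polarization_X_inl (t : Fin (n + 1)) : polarization n (X (Sum.inl t)) = 0 := by
  simp [polarization_apply, pderiv_X]

theorem polarization_X_inr (t : Fin (n + 1)) :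
    polarization n (X (Sum.inr t)) = X (Sum.inl t) := by
  simp [polarization_apply, pderiv_X, Pi.single_apply]

noncomputable def xyMinor : MvPolynomial (Fin (n + 1) ⊕ Fin (n + 1)) ℂ :=
  X (Sum.inl 0) * X (Sum.inr 1) - X (Sum.inl 1) * X (Sum.inr 0)

theorem polarization_xyMinor : polarization n (xyMinor n) = 0 := by
  simp only [xyMinor, map_sub, Derivation.leibniz, polarization_X_inl, polarization_X_inr,
    smul_eq_mul, mul_zero, add_zero]
  ring

theorem xyMinor_ne_zero (hn : 1 ≤ n) : xyMinor n ≠ 0 := by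
  have h10 : (1 : Fin (n + 1)) ≠ 0 := by rw [Ne, Fin.one_eq_zero_iff]; omega
  intro h
  have := congrArg (eval fun v => if v = Sum.inl 0 ∨ v = Sum.inr 1 then (1 : ℂ) else 0) h
  simp [xyMinor, h10] at this

variable {n} in
theorem highest_weight_vector_eq {A B i : ℕ} (hiA : i ≤ A) :
    ∑ j ∈ Finset.range (i + 1),
        ((-1 : ℂ) ^ j * (Nat.choose i j : ℂ)) •
          (X (Sum.inl (0 : Fin (n + 1))) ^ (A - j) * X (Sum.inl (1 : Fin (n + 1))) ^ j *
           X (Sum.inr (0 : Fin (n + 1))) ^ (B - i + j) *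
           X (Sum.inr (1 : Fin (n + 1))) ^ (i - j)) =
      X (Sum.inl 0) ^ (A - i) * xyMinor n ^ i * X (Sum.inr 0) ^ (B - i) := by
  rw [xyMinor, sub_eq_neg_add, add_pow, Finset.mul_sum, Finset.sum_mul]
  refine Finset.sum_congr rfl fun j hj => ?_
  have hji : j ≤ i := Nat.lt_succ_iff.mp (Finset.mem_range.mp hj)
  rw [show A - j = A - i + (i - j) by omega, smul_eq_C_mul]
  simp only [map_mul, map_pow, map_neg, map_one, map_natCast]
  ring

end Polarization

theorem Dk_highest_weight_vector_ne_zero_general (n k A B i : ℕ)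
    (hn : 1 ≤ n) (hiA : i ≤ A) (hikB : i + k ≤ B) :
    ((Dop n) ^ k)
      (∑ j ∈ Finset.range (i + 1),
        ((-1 : ℂ) ^ j * (Nat.choose i j : ℂ)) •
          (X (Sum.inl (0 : Fin (n + 1))) ^ (A - j) * X (Sum.inl (1 : Fin (n + 1))) ^ j *
           X (Sum.inr (0 : Fin (n + 1))) ^ (B - i + j) *
           X (Sum.inr (1 : Fin (n + 1))) ^ (i - j))) ≠ 0 := by
  have hD : polarization n (X (Sum.inl 0) ^ (A - i) * xyMinor n ^ i) = 0 := by
    simp [polarization_X_inl, polarization_xyMinor]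
  rw [highest_weight_vector_eq hiA, ← toLinearMap_polarization, Module.End.pow_apply,
    Derivation.coeFn_coe, Derivation.iterate_mul_of_apply_eq_zero _ hD,
    Derivation.iterate_pow_of_apply_eq _ (polarization_X_inr n 0) (polarization_X_inl n 0)]
  have hk : (B - i).descFactorial k ≠ 0 := by
    rw [Ne, Nat.descFactorial_eq_zero_iff_lt]
    omega
  simp [hk, X_ne_zero, xyMinor_ne_zero n hn]

/-- The highest weight vectors
`v_i = Σ_{j=0}^{i} (−1)^j·C(i,j)·x_0^{A−j}·x_1^{j}·y_0^{B−i+j}·y_1^{i−j}`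
do not vanish under `D^k` when `i ≤ A` and `i + k ≤ B`. -/
theorem Dk_highest_weight_vector_ne_zero (n k A B i : ℕ)
    (hn : 1 ≤ n) (hk : 1 ≤ k) (hiA : i ≤ A) (hikB : i + k ≤ B) :
    ((Dop n) ^ k)
      (∑ j ∈ Finset.range (i + 1),
        ((-1 : ℂ) ^ j * (Nat.choose i j : ℂ)) •
          (X (Sum.inl (0 : Fin (n + 1))) ^ (A - j) * X (Sum.inl (1 : Fin (n + 1))) ^ j *
           X (Sum.inr (0 : Fin (n + 1))) ^ (B - i + j) *
           X (Sum.inr (1 : Fin (n + 1))) ^ (i - j))) ≠ 0 :=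
  Dk_highest_weight_vector_ne_zero_general n k A B i hn hiA hikB
end

section
/- Let n ≥ 1, k ≥ 1 and let a1 > a2 ≥ 1 be integers. Then the limit as m → ∞ of [C(m·a1−k+n, n)·C(m·a2+k−1, n) − C(m·a1+n, n)·C(m·a2−1, n)] / m^{2n−1} exists and equals n·k·a1^{n−1}·a2^{n−1}·(a1−a2)/(n!)^2, where C(·,·) denotes the binomial coefficient. In particular, the dimension of V_{m·a1−k, m·a2+k−(n+1)} exceeds the dimension of V_{m·a1, m·a2−(n+1)} by a quantity of exact growth order m^{2n−1}. -/
/-!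
Since `n! · C(N, n) = N (N - 1) ⋯ (N - n + 1)`, each binomial coefficient times `n!` is a product
of `n` affine factors `a·m + c` with a common slope `a` (`a1` or `a2`). Substituting `m = 1/t`,
`∏ (a i·m + c i) = m^(#s) ∏ (a i + c i·t)`: hence `∏ (a i·m + c i) / m^(#s) → ∏ a i`, and the
difference of two such products with the same slopes, divided by `m^(#s - 1)`, is a difference
quotient at `t = 0`, so it tends to the derivative `∑ i, (c i - c' i) ∏_{j ≠ i} a j`.
Writing `f₁f₂ - g₁g₂ = (f₁ - g₁) f₂ + g₁ (f₂ - g₂)` then gives the limit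
`n (a1^(n-1) a2^n (-k) + a1^n a2^(n-1) k)`.
-/

open Filter Topology Finset

section ProductAsymptotics

variable {ι : Type*} (s : Finset ι) (a c c' : ι → ℝ)

lemma prod_mul_add_eq_pow_mul_prod {x : ℝ} (hx : x ≠ 0) :
    ∏ i ∈ s, (a i * x + c i) = x ^ #s * ∏ i ∈ s, (a i + c i * x⁻¹) := by
  rw [← prod_const, ← prod_mul_distrib]
  refine prod_congr rfl fun i _ => ?_
  field_simp

lemma tendsto_prod_mul_add_div_pow :
    Tendsto (fun x => (∏ i ∈ s, (a i * x + c i)) / x ^ #s) atTop (𝓝 (∏ i ∈ s, a i)) := by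
  have hcont : Continuous fun t : ℝ => ∏ i ∈ s, (a i + c i * t) := by fun_prop
  have hlim := (hcont.tendsto 0).comp tendsto_inv_atTop_zero
  simp only [mul_zero, add_zero] at hlim
  refine hlim.congr' ?_
  filter_upwards [eventually_ne_atTop 0] with x hx
  rw [Function.comp_apply, prod_mul_add_eq_pow_mul_prod s a c hx,
    mul_div_cancel_left₀ _ (pow_ne_zero _ hx)]

lemma tendsto_prod_mul_add_sub_prod_div_pow [DecidableEq ι] :
    Tendsto (fun x => (∏ i ∈ s, (a i * x + c i) - ∏ i ∈ s, (a i * x + c' i)) / x ^ (#s - 1))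
      atTop (𝓝 (∑ i ∈ s, (∏ j ∈ s.erase i, a j) * (c i - c' i))) := by
  have hderiv (e : ι → ℝ) : HasDerivAt (fun t => ∏ i ∈ s, (a i + e i * t))
      (∑ i ∈ s, (∏ j ∈ s.erase i, a j) * e i) 0 := by
    simpa using HasDerivAt.fun_finsetProd (u := s) (x := (0 : ℝ))
      fun i _ => ((hasDerivAt_id (0 : ℝ)).const_mul (e i)).const_add (a i)
  set F := fun t => ∏ i ∈ s, (a i + c i * t) - ∏ i ∈ s, (a i + c' i * t)
  have hF0 : F 0 = 0 := by simp [F]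
  have hslope := ((hderiv c).fun_sub (hderiv c')).tendsto_slope_zero.comp
    (tendsto_inv_atTop_nhdsGT_zero.mono_right (nhdsGT_le_nhdsNE 0))
  simp only [← sum_sub_distrib, ← mul_sub] at hslope
  refine hslope.congr' ?_
  filter_upwards [eventually_gt_atTop 0] with x hx
  rcases s.eq_empty_or_nonempty with rfl | hs
  · simp
  have hpow : x ^ #s = x ^ (#s - 1) * x := by
    rw [← pow_succ, Nat.sub_add_cancel hs.card_pos]
  simp only [Function.comp_apply, zero_add, hF0, sub_zero, inv_inv, smul_eq_mul, F]
  rw [prod_mul_add_eq_pow_mul_prod s a c hx.ne', prod_mul_add_eq_pow_mul_prod s a c' hx.ne',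
    ← mul_sub, hpow]
  field_simp

end ProductAsymptotics

section DescPochhammer

lemma descPochhammer_eval_mul_add (n : ℕ) (a c x : ℝ) :
    (descPochhammer ℝ n).eval (a * x + c) = ∏ i ∈ range n, (a * x + (c - i)) := by
  simp only [descPochhammer_eval_eq_prod_range, add_sub_assoc]

lemma tendsto_descPochhammer_eval_div_pow (n : ℕ) (a c : ℝ) :
    Tendsto (fun x => (descPochhammer ℝ n).eval (a * x + c) / x ^ n) atTop (𝓝 (a ^ n)) := by
  simpa only [descPochhammer_eval_mul_add, prod_const, card_range] using
    tendsto_prod_mul_add_div_pow (range n) (fun _ => a) (fun i => c - i)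

lemma tendsto_descPochhammer_eval_sub_div_pow (n : ℕ) (a c c' : ℝ) :
    Tendsto (fun x => ((descPochhammer ℝ n).eval (a * x + c)
        - (descPochhammer ℝ n).eval (a * x + c')) / x ^ (n - 1))
      atTop (𝓝 (n * a ^ (n - 1) * (c - c'))) := by
  have hsum : ∑ i ∈ range n, (∏ _j ∈ (range n).erase i, a) * ((c - i) - (c' - i))
      = n * a ^ (n - 1) * (c - c') := by
    rw [sum_congr rfl fun i hi => by
        rw [prod_const, card_erase_of_mem hi, card_range, sub_sub_sub_cancel_right],
      sum_const, card_range, nsmul_eq_mul, mul_assoc]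
  simpa only [descPochhammer_eval_mul_add, card_range, hsum] using
    tendsto_prod_mul_add_sub_prod_div_pow (range n) (fun _ => a) (fun i => c - i) (fun i => c' - i)

lemma tendsto_descPochhammer_mul_sub_mul_div_pow (n : ℕ) (a b c c' d d' : ℝ) :
    Tendsto (fun x =>
        ((descPochhammer ℝ n).eval (a * x + c) * (descPochhammer ℝ n).eval (b * x + d)
          - (descPochhammer ℝ n).eval (a * x + c') * (descPochhammer ℝ n).eval (b * x + d'))
          / x ^ (2 * n - 1))
      atTop (𝓝 (n * (a ^ (n - 1) * b ^ n * (c - c') + a ^ n * b ^ (n - 1) * (d - d')))) := by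
  have hlim := ((tendsto_descPochhammer_eval_sub_div_pow n a c c').mul
    (tendsto_descPochhammer_eval_div_pow n b d)).add
    ((tendsto_descPochhammer_eval_div_pow n a c').mul
      (tendsto_descPochhammer_eval_sub_div_pow n b d d'))
  rw [show (n : ℝ) * (a ^ (n - 1) * b ^ n * (c - c') + a ^ n * b ^ (n - 1) * (d - d'))
      = n * a ^ (n - 1) * (c - c') * b ^ n + a ^ n * (n * b ^ (n - 1) * (d - d')) by ring]
  refine hlim.congr' ?_
  filter_upwards [eventually_ne_atTop 0] with x hx
  have hpow : x ^ (2 * n - 1) = x ^ (n - 1) * x ^ n := by rw [← pow_add]; congr 1; omega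
  rw [hpow]
  field_simp
  ring

end DescPochhammer

theorem dimension_difference_growth_general (n k a1 a2 : ℕ)
    (ha2 : 1 ≤ a2) (h12 : a2 < a1) :
    Filter.Tendsto
      (fun m : ℕ =>
        (((Nat.choose (m * a1 - k + n) n * Nat.choose (m * a2 + k - 1) n : ℕ) : ℝ)
          - ((Nat.choose (m * a1 + n) n * Nat.choose (m * a2 - 1) n : ℕ) : ℝ))
        / (m : ℝ) ^ (2 * n - 1))
      Filter.atTop
      (nhds ((n : ℝ) * (k : ℝ) * (a1 : ℝ) ^ (n - 1) * (a2 : ℝ) ^ (n - 1)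
        * ((a1 : ℝ) - (a2 : ℝ)) / ((Nat.factorial n : ℝ)) ^ 2)) := by
  have hlimit : (n : ℝ) * (a1 ^ (n - 1) * a2 ^ n * ((n - k) - n)
      + a1 ^ n * a2 ^ (n - 1) * ((k - 1) - (-1)))
      = n * k * a1 ^ (n - 1) * a2 ^ (n - 1) * (a1 - a2) := by
    rcases n with _ | n
    · simp
    · simp only [Nat.add_sub_cancel, pow_succ]; ring
  have h := ((tendsto_descPochhammer_mul_sub_mul_div_pow n a1 a2 (n - k) n (k - 1) (-1)).comp
    tendsto_natCast_atTop_atTop).div_const ((n.factorial : ℝ) ^ 2)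
  rw [hlimit] at h
  refine h.congr' ?_
  filter_upwards [eventually_gt_atTop k] with m hm
  have hka1 : k ≤ m * a1 := le_mul_of_le_of_one_le hm.le (by omega)
  have hma2 : 1 ≤ m * a2 := one_le_mul (by omega) ha2
  have e1 : ((m * a1 - k + n : ℕ) : ℝ) = a1 * m + (n - k) := by
    push_cast [Nat.cast_sub hka1]; ring
  have e2 : ((m * a2 + k - 1 : ℕ) : ℝ) = a2 * m + (k - 1) := by
    push_cast [Nat.cast_sub (by omega : 1 ≤ m * a2 + k)]; ring
  have e3 : ((m * a1 + n : ℕ) : ℝ) = a1 * m + n := by push_cast; ring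
  have e4 : ((m * a2 - 1 : ℕ) : ℝ) = a2 * m + -1 := by push_cast [Nat.cast_sub hma2]; ring
  simp only [Function.comp_apply, Nat.cast_mul, Nat.cast_choose_eq_descPochhammer_div,
    e1, e2, e3, e4]
  ring

/-- For `a1 > a2 ≥ 1`, the difference
`C(m·a1−k+n, n)·C(m·a2+k−1, n) − C(m·a1+n, n)·C(m·a2−1, n)` (the amount by which the
dimension of `V_{m·a1−k, m·a2+k−(n+1)}` exceeds that of `V_{m·a1, m·a2−(n+1)}`), divided
by `m^{2n−1}`, converges to `n·k·a1^{n−1}·a2^{n−1}·(a1−a2)/(n!)^2` as `m → ∞`. -/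
theorem dimension_difference_growth (n k a1 a2 : ℕ)
    (hn : 1 ≤ n) (hk : 1 ≤ k) (ha2 : 1 ≤ a2) (h12 : a2 < a1) :
    Filter.Tendsto
      (fun m : ℕ =>
        (((Nat.choose (m * a1 - k + n) n * Nat.choose (m * a2 + k - 1) n : ℕ) : ℝ)
          - ((Nat.choose (m * a1 + n) n * Nat.choose (m * a2 - 1) n : ℕ) : ℝ))
        / (m : ℝ) ^ (2 * n - 1))
      Filter.atTop
      (nhds ((n : ℝ) * (k : ℝ) * (a1 : ℝ) ^ (n - 1) * (a2 : ℝ) ^ (n - 1)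
        * ((a1 : ℝ) - (a2 : ℝ)) / ((Nat.factorial n : ℝ)) ^ 2)) :=
  dimension_difference_growth_general n k a1 a2 ha2 h12
end
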